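/- arXiv:1405.3194 — 2 statements merged into one kernel-verified Lean document; each statement's English description precedes it below -/
import Mathlib

section
/- For all positive integers k and p, the generalized odd-indexed quadratic Gauss sum satisfies ∑_{n=1}^{pk} exp(i π (2n-1)² / (4k)) = (1 + i) * p * √(2k) * (1 - (-1)^k) / 4, where the sum is taken in the complex numbers. -/
open Finset Real Complex

open Filter Topology

/-!
Write the summand for `n = m + 1` as `e m = exp (π i (2m+1)² / 4k)`. Then
`e (m + k) = (-1)^(k+1) e m`, so the sum is `∑_{j<p} (-1)^((k+1) j)` times the complete sum
`S = ∑_{m<k} e m`: this is `p S` when `k` is odd, and `0` when `k` is even because then the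
reflection `m ↦ k - 1 - m` gives `S = -S`.

For odd `k`, `S = (i k)^(1/2)` is the Landsberg–Schaar evaluation. The theta series
`∑ₙ exp (-π τ (n + 1/2)²)` at `τ = 1/(k² s) - i/k` is computed in two ways: splitting `n` into
residue classes modulo `k` and applying Poisson summation to each class gives
`s^(1/2) ∑_{r<k} e r θ_r(s)`, while Poisson summation applied twice to the whole series (the
phase `(-1)^n` becomes `exp (π i k n²)` since `k` is odd) gives `(i k s)^(1/2) θ(s)`. All the
theta series `θ_r`, `θ` tend to `1` as `s → ∞`.
-/

namespace Complex

theorem mul_cpow_of_re_nonneg_of_re_pos {x y : ℂ} (hx : 0 ≤ x.re) (hx₀ : x ≠ 0) (hy : 0 < y.re)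
    (s : ℂ) : (x * y) ^ s = x ^ s * y ^ s := by
  have hy₀ : y ≠ 0 := fun h => by simp [h] at hy
  have hxarg := abs_le.1 (abs_arg_le_pi_div_two_iff.2 hx)
  have hyarg := abs_lt.1 (abs_arg_lt_pi_div_two_iff.2 (Or.inl hy))
  rw [cpow_def_of_ne_zero (mul_ne_zero hx₀ hy₀), cpow_def_of_ne_zero hx₀, cpow_def_of_ne_zero hy₀,
    log_mul hx₀ hy₀ ⟨by linarith, by linarith⟩, add_mul, exp_add]

theorem I_mul_natCast_cpow_one_half (k : ℕ) :
    (I * k) ^ (1 / 2 : ℂ) = (1 + I) * √(2 * k) / 2 := by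
  rcases eq_or_ne k 0 with rfl | hk
  · simp
  have hI : I ^ (1 / 2 : ℂ) = √2⁻¹ * (1 + I) := by rw [one_div, ← Complex.sqrt, sqrt_I]
  have hsqrt : (k : ℂ) ^ (1 / 2 : ℂ) = √k := by
    rw [Real.sqrt_eq_rpow, ofReal_cpow (Nat.cast_nonneg k)]; push_cast; rfl
  rw [mul_cpow_of_re_nonneg_of_re_pos (by simp) I_ne_zero (by simpa using Nat.pos_of_ne_zero hk),
    hI, hsqrt, Real.sqrt_mul zero_le_two, Real.sqrt_inv]
  have h2 : (√2 : ℂ) ^ 2 = 2 := by norm_cast; simp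
  have h2₀ : (√2 : ℂ) ≠ 0 := by simp
  push_cast
  field_simp
  linear_combination -(1 + I) * √k * h2

theorem summable_cexp_neg_mul_add_sq {b : ℂ} (hb : 0 < b.re) (β : ℂ) :
    Summable fun n : ℤ => cexp (-π * b * (n + β) ^ 2) := by
  have hτ : 0 < (I * b).im := by simpa using hb
  refine (((summable_jacobiTheta₂_term_iff (I * b * β) (I * b)).2 hτ).mul_left
    (cexp (-π * b * β ^ 2))).congr fun n => ?_
  rw [jacobiTheta₂_term, ← exp_add]
  congr 1
  linear_combination (π * b * n ^ 2 + 2 * π * b * β * n) * I_sq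

theorem tsum_cexp_neg_div_mul_add_sq {a : ℂ} (ha : 0 < a.re) (β : ℂ) :
    ∑' n : ℤ, cexp (-π / a * (n + β) ^ 2) =
      a ^ (1 / 2 : ℂ) * ∑' n : ℤ, cexp (-π * a * n ^ 2 - 2 * π * I * β * n) := by
  have ha₀ : a ^ (1 / 2 : ℂ) ≠ 0 := by
    rw [Ne, cpow_eq_zero_iff]; rintro ⟨rfl, -⟩; simp at ha
  have h := tsum_exp_neg_quadratic ha (-I * β)
  rw [show I * (-I * β) = β by linear_combination (-β) * I_sq] at h
  calc _ = a ^ (1 / 2 : ℂ) * (1 / a ^ (1 / 2 : ℂ) * ∑' n : ℤ, cexp (-π / a * (n + β) ^ 2)) := by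
        rw [← mul_assoc, mul_one_div_cancel ha₀, one_mul]
    _ = _ := by
        rw [← h]; congr 2; funext n; congr 1; ring

end Complex

theorem tendsto_tsum_cexp_neg_mul_sq_add {c : ℤ → ℂ} (hc : ∀ n, (c n).re ≤ 0) :
    Tendsto (fun s : ℝ => ∑' n : ℤ, cexp (-π * s * n ^ 2 + c n)) atTop (𝓝 (cexp (c 0))) := by
  have hnorm (s : ℝ) (n : ℤ) : ‖cexp (-π * s * n ^ 2 + c n)‖ ≤ rexp (-π * s * n ^ 2) := by
    rw [norm_exp, Real.exp_le_exp]
    simpa [← ofReal_intCast, ← ofReal_pow] using hc n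
  have hsum : Summable fun n : ℤ => rexp (-π * n ^ 2) := by
    simpa [norm_exp, ← ofReal_intCast, ← ofReal_pow] using
      (summable_cexp_neg_mul_add_sq (b := 1) (by simp) 0).norm
  rw [← tsum_ite_eq (0 : ℤ) (fun n => cexp (c n))]
  refine tendsto_tsum_of_dominated_convergence hsum (fun n => ?_) ?_
  · rcases eq_or_ne n 0 with rfl | hn
    · simp
    simp only [hn, if_false]
    have hn2 : 0 < π * (n : ℝ) ^ 2 := by positivity
    refine squeeze_zero_norm (fun s => hnorm s n) (Real.tendsto_exp_atBot.comp
      ((tendsto_id.atTop_mul_const_of_neg (neg_lt_zero.2 hn2)).congr fun s => ?_))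
    simp only [id]; ring
  · filter_upwards [eventually_ge_atTop 1] with s hs n
    refine (hnorm s n).trans (Real.exp_le_exp.2 ?_)
    nlinarith [mul_nonneg (mul_nonneg pi_pos.le (sq_nonneg (n : ℝ))) (sub_nonneg.2 hs)]

theorem tsum_int_eq_sum_range_tsum {E : Type*} [NormedAddCommGroup E] [CompleteSpace E]
    {f : ℤ → E} (hf : Summable f) (k : ℕ) [NeZero k] :
    ∑' n, f n = ∑ r ∈ range k, ∑' q : ℤ, f (q * k + r) := by
  let e : Fin k × ℤ ≃ ℤ := (Equiv.prodComm (Fin k) ℤ).trans (Int.divModEquiv k).symm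
  have hfe : Summable fun c => f (e c) := e.summable_iff.2 hf
  rw [← e.tsum_eq, hfe.tsum_prod, tsum_fintype,
    ← Fin.sum_univ_eq_sum_range (fun r => ∑' q : ℤ, f (q * k + r))]
  rfl

theorem Finset.sum_range_mul_of_add_eq_mul {R : Type*} [CommSemiring R] {f : ℕ → R} {k : ℕ}
    {c : R} (hf : ∀ n, f (n + k) = c * f n) (p : ℕ) :
    ∑ n ∈ range (p * k), f n = (∑ j ∈ range p, c ^ j) * ∑ n ∈ range k, f n := by
  have hshift (j n : ℕ) : f (j * k + n) = c ^ j * f n := by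
    induction j with
    | zero => simp
    | succ j ih => rw [add_mul, one_mul, add_right_comm, hf, ih, pow_succ]; ring
  induction p with
  | zero => simp
  | succ p ih =>
    rw [add_mul, one_mul, sum_range_add, ih, sum_range_succ]
    simp only [hshift, ← mul_sum]
    ring

theorem Odd.even_mul_mul_add_one {k : ℕ} (hk : Odd k) (n : ℤ) : Even (n * (k * n + 1)) := by
  obtain ⟨j, rfl⟩ := hk
  rw [show n * ((2 * j + 1 : ℕ) * n + 1) = n * (n + 1) + 2 * (j * n ^ 2) by push_cast; ring]
  exact (Int.even_mul_succ_self n).add (even_two_mul _)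

noncomputable def oddGaussTerm (k : ℕ) (m : ℤ) : ℂ := cexp (π * I * (2 * m + 1) ^ 2 / (4 * k))

theorem oddGaussTerm_neg_sub_one (k : ℕ) (m : ℤ) :
    oddGaussTerm k (-m - 1) = oddGaussTerm k m := by
  simp only [oddGaussTerm]; congr 2; push_cast; ring

theorem oddGaussTerm_add_self {k : ℕ} (hk : k ≠ 0) (m : ℤ) :
    oddGaussTerm k (m + k) = (-1) ^ (k + 1) * oddGaussTerm k m := by
  have hexp : π * I * (2 * ((m + k : ℤ) : ℂ) + 1) ^ 2 / (4 * k) =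
      π * I * (2 * m + 1) ^ 2 / (4 * k) + m * (2 * π * I) + (k + 1 : ℕ) * (π * I) := by
    push_cast; field_simp; ring
  rw [oddGaussTerm, hexp, Complex.exp_add, Complex.exp_add, exp_int_mul_two_pi_mul_I,
    Complex.exp_nat_mul, exp_pi_mul_I, oddGaussTerm]
  ring

theorem oddGaussTerm_periodic {k : ℕ} (hk : Odd k) : Function.Periodic (oddGaussTerm k) k := by
  intro m
  rw [oddGaussTerm_add_self hk.pos.ne', hk.add_one.neg_one_pow, one_mul]

theorem sum_range_mul_oddGaussTerm {k : ℕ} (hk : k ≠ 0) (p : ℕ) :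
    ∑ m ∈ range (p * k), oddGaussTerm k m =
      (∑ j ∈ range p, ((-1) ^ (k + 1)) ^ j) * ∑ m ∈ range k, oddGaussTerm k m :=
  sum_range_mul_of_add_eq_mul (fun n => by push_cast; exact oddGaussTerm_add_self hk n) p

theorem sum_range_oddGaussTerm_of_even {k : ℕ} (hk : Even k) :
    ∑ m ∈ range k, oddGaussTerm k m = 0 := by
  rcases eq_or_ne k 0 with rfl | hk₀
  · simp
  have hreflect : ∀ m ∈ range k, oddGaussTerm k (k - 1 - m : ℕ) = -oddGaussTerm k m := by
    intro m hm
    have hmk := mem_range.1 hm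
    rw [show ((k - 1 - m : ℕ) : ℤ) = (-m - 1) + k by omega, oddGaussTerm_add_self hk₀,
      oddGaussTerm_neg_sub_one, hk.add_one.neg_one_pow]
    ring
  have h := sum_range_reflect (fun m : ℕ => oddGaussTerm k m) k
  rw [sum_congr rfl hreflect, sum_neg_distrib] at h
  linear_combination -h / 2

section Theta

variable {k : ℕ} {s : ℝ}

theorem re_inv_natCast_sq_mul_sub_I_div_pos (hk : 0 < k) (hs : 0 < s) :
    0 < (((k : ℂ) ^ 2 * s)⁻¹ - I / k).re := by
  rw [show ((k : ℂ) ^ 2 * s)⁻¹ = ((k ^ 2 * s : ℝ)⁻¹ : ℝ) by push_cast; rfl]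
  simp only [sub_re, ofReal_re, div_natCast_re, I_re, zero_div, sub_zero]
  positivity

theorem tsum_theta_eq_sum_oddGaussTerm (hk : Odd k) (hs : 0 < s) :
    ∑' n : ℤ, cexp (-π * (((k : ℂ) ^ 2 * s)⁻¹ - I / k) * (n + 1 / 2) ^ 2) =
      (s : ℂ) ^ (1 / 2 : ℂ) * ∑ r ∈ range k, oddGaussTerm k r *
        ∑' m : ℤ, cexp (-π * s * m ^ 2 - 2 * π * I * ((r + 1 / 2) / k) * m) := by
  have : NeZero k := ⟨hk.pos.ne'⟩
  have hk₀ : (k : ℂ) ≠ 0 := Nat.cast_ne_zero.2 hk.pos.ne'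
  have hs₀ : (s : ℂ) ≠ 0 := ofReal_ne_zero.2 hs.ne'
  rw [tsum_int_eq_sum_range_tsum (summable_cexp_neg_mul_add_sq
    (re_inv_natCast_sq_mul_sub_I_div_pos hk.pos hs) _) k, mul_sum]
  refine sum_congr rfl fun r _ => ?_
  have hterm (q : ℤ) :
      cexp (-π * (((k : ℂ) ^ 2 * s)⁻¹ - I / k) * (((q * k + r : ℤ) : ℂ) + 1 / 2) ^ 2) =
        oddGaussTerm k r * cexp (-π / s * (q + (r + 1 / 2) / k) ^ 2) := by
    rw [← (oddGaussTerm_periodic hk).int_mul q r, oddGaussTerm, ← Complex.exp_add]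
    congr 1
    push_cast
    field_simp
    ring
  rw [tsum_congr hterm, tsum_mul_left, tsum_cexp_neg_div_mul_add_sq (by simpa using hs)]
  ring

theorem tsum_theta_eq_cpow_mul_tsum (hk : Odd k) (hs : 0 < s) :
    ∑' n : ℤ, cexp (-π * (((k : ℂ) ^ 2 * s)⁻¹ - I / k) * (n + 1 / 2) ^ 2) =
      (I * k * s) ^ (1 / 2 : ℂ) * ∑' n : ℤ, cexp (-π * (s + I / k) * n ^ 2) := by
  have hk₀ : (k : ℂ) ≠ 0 := Nat.cast_ne_zero.2 hk.pos.ne'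
  have hs₀ : (s : ℂ) ≠ 0 := ofReal_ne_zero.2 hs.ne'
  set w : ℂ := s + I / k with hw
  have hw₀ : w ≠ 0 := fun h => by simpa [hw, hs.ne'] using congrArg re h
  have hw_re : 0 < w.re := by simpa [hw] using hs
  have hτ : ((k : ℂ) ^ 2 * s)⁻¹ - I / k = w / (I * k * s) := by
    rw [hw]; field_simp; ring_nf; rw [I_sq]; ring
  have hτ_re : 0 < (I * k * s / w).re := by
    have := re_inv_natCast_sq_mul_sub_I_div_pos hk.pos hs
    rw [← inv_div, ← hτ, inv_re]
    exact div_pos this (normSq_pos.2 fun h => this.ne' (by rw [h, zero_re]))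
  have hτ_inv : I * k * s / w = 1 / w + I * k := by
    rw [div_eq_iff hw₀, add_mul, one_div_mul_cancel hw₀, hw]
    field_simp
    linear_combination (-1 : ℂ) * I_sq
  have habsorb (n : ℤ) : cexp (-π * (I * k * s / w) * n ^ 2 - 2 * π * I * (1 / 2) * n) =
      cexp (-π / w * (n + 0) ^ 2) := by
    obtain ⟨j, hj⟩ := hk.even_mul_mul_add_one n
    have hj' : (n : ℂ) * (k * n + 1) = 2 * j := by exact_mod_cast hj.trans (two_mul j).symm
    rw [show -π * (I * k * s / w) * n ^ 2 - 2 * π * I * (1 / 2) * n =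
        -π / w * (n + 0) ^ 2 + (-j : ℤ) * (2 * π * I) by
          rw [hτ_inv]; push_cast; linear_combination (-π * I) * hj',
      Complex.exp_add, exp_int_mul_two_pi_mul_I, mul_one]
  calc _ = ∑' n : ℤ, cexp (-π / (I * k * s / w) * (n + 1 / 2) ^ 2) := by
        simp_rw [hτ, div_div_eq_mul_div, mul_div_assoc]
    _ = (I * k * s / w) ^ (1 / 2 : ℂ) * (w ^ (1 / 2 : ℂ) *
          ∑' n : ℤ, cexp (-π * w * n ^ 2 - 2 * π * I * 0 * n)) := by
        rw [tsum_cexp_neg_div_mul_add_sq hτ_re, tsum_congr habsorb,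
          tsum_cexp_neg_div_mul_add_sq hw_re]
    _ = _ := by
        rw [← mul_assoc, ← mul_cpow_of_re_nonneg_of_re_pos hτ_re.le
          (fun h => by simp [h] at hτ_re) hw_re, div_mul_cancel₀ _ hw₀]
        simp

theorem sum_oddGaussTerm_mul_tsum_eq (hk : Odd k) (hs : 0 < s) :
    ∑ r ∈ range k, oddGaussTerm k r *
        ∑' m : ℤ, cexp (-π * s * m ^ 2 - 2 * π * I * ((r + 1 / 2) / k) * m) =
      (I * k) ^ (1 / 2 : ℂ) * ∑' n : ℤ, cexp (-π * (s + I / k) * n ^ 2) := by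
  have hs₀ : (s : ℂ) ^ (1 / 2 : ℂ) ≠ 0 := by
    rw [Ne, cpow_eq_zero_iff]; exact fun h => hs.ne' (ofReal_eq_zero.1 h.1)
  have h := (tsum_theta_eq_sum_oddGaussTerm hk hs).symm.trans (tsum_theta_eq_cpow_mul_tsum hk hs)
  rw [mul_cpow_of_re_nonneg_of_re_pos (by simp)
    (mul_ne_zero I_ne_zero (Nat.cast_ne_zero.2 hk.pos.ne')) (by simpa using hs),
    mul_comm _ ((s : ℂ) ^ _)] at h
  exact mul_left_cancel₀ hs₀ (h.trans (mul_assoc _ _ _))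

end Theta

theorem sum_range_oddGaussTerm_of_odd {k : ℕ} (hk : Odd k) :
    ∑ r ∈ range k, oddGaussTerm k r = (I * k) ^ (1 / 2 : ℂ) := by
  have hrow (r : ℕ) : Tendsto (fun s : ℝ => ∑' m : ℤ,
      cexp (-π * s * m ^ 2 - 2 * π * I * ((r + 1 / 2) / k) * m)) atTop (𝓝 1) := by
    have := tendsto_tsum_cexp_neg_mul_sq_add (c := fun m => -(2 * π * I * ((r + 1 / 2) / k) * m))
      fun m => by simp
    simpa [sub_eq_add_neg] using this
  have hcol : Tendsto (fun s : ℝ => ∑' n : ℤ, cexp (-π * (s + I / k) * n ^ 2)) atTop (𝓝 1) := by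
    have := tendsto_tsum_cexp_neg_mul_sq_add (c := fun n => -π * (I / k) * n ^ 2)
      fun n => by simp [sq]
    simp only [Int.cast_zero, zero_pow two_ne_zero, mul_zero, Complex.exp_zero] at this
    refine this.congr fun s => tsum_congr fun n => ?_
    ring_nf
  have hL := tendsto_finsetSum (range k) fun r _ => (hrow r).const_mul (oddGaussTerm k r)
  have hR := hcol.const_mul ((I * k) ^ (1 / 2 : ℂ))
  simp only [mul_one] at hL hR
  exact tendsto_nhds_unique_of_eventuallyEq hL hR
    ((eventually_gt_atTop 0).mono fun s hs => sum_oddGaussTerm_mul_tsum_eq hk hs)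

theorem generalized_odd_indexed_quadratic_gauss_sum_general (k p : ℕ) :
    ∑ n ∈ Finset.Icc 1 (p * k),
        Complex.exp (Complex.I * (π : ℂ) * (2 * (n : ℂ) - 1) ^ 2 / (4 * (k : ℂ))) =
      (1 + Complex.I) * (p : ℂ) * (Real.sqrt (2 * (k : ℝ)) : ℂ) *
        (1 - (-1 : ℂ) ^ k) / 4 := by
  have hshift : ∑ n ∈ Finset.Icc 1 (p * k),
      Complex.exp (Complex.I * (π : ℂ) * (2 * (n : ℂ) - 1) ^ 2 / (4 * (k : ℂ))) =
        ∑ m ∈ range (p * k), oddGaussTerm k m := by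
    rw [← Ico_add_one_right_eq_Icc, sum_Ico_eq_sum_range, Nat.add_sub_cancel]
    refine sum_congr rfl fun m _ => ?_
    rw [oddGaussTerm]; congr 1; push_cast; ring
  rw [hshift]
  rcases Nat.even_or_odd k with hk | hk
  · rcases eq_or_ne k 0 with rfl | hk₀
    · simp
    rw [sum_range_mul_oddGaussTerm hk₀, sum_range_oddGaussTerm_of_even hk, hk.neg_one_pow]
    ring
  · rw [sum_range_mul_oddGaussTerm hk.pos.ne', sum_range_oddGaussTerm_of_odd hk,
      I_mul_natCast_cpow_one_half, hk.add_one.neg_one_pow, hk.neg_one_pow]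
    simp only [one_pow, sum_const, card_range, nsmul_eq_mul, mul_one]
    ring

theorem generalized_odd_indexed_quadratic_gauss_sum (k p : ℕ) (hk : 0 < k) (hp : 0 < p) :
    ∑ n ∈ Finset.Icc 1 (p * k),
        Complex.exp (Complex.I * (π : ℂ) * (2 * (n : ℂ) - 1) ^ 2 / (4 * (k : ℂ))) =
      (1 + Complex.I) * (p : ℂ) * (Real.sqrt (2 * (k : ℝ)) : ℂ) *
        (1 - (-1 : ℂ) ^ k) / 4 :=
  generalized_odd_indexed_quadratic_gauss_sum_general k p
end

section
/- For every odd positive integer k, ∑_{n=0}^{k-1} exp(i π (n² - n) / k) = ((1 + i)/2) * exp(-i π / (4k)) * √(2k), where the sum is taken in the complex numbers. -/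
open Finset Real Complex Filter Topology HurwitzZeta

/-!
Write `θ` for Jacobi's theta function and `G(N) = ∑_{r < N} e^{2πi r²/N}`. Along
`τ = 2/N + ix/N²`, as `x → 0⁺`, the quantity `√x θ(τ)` is computed in two ways. Splitting
`n ∈ ℤ` by its residue mod `N` writes `θ(τ)` as a combination of even Hurwitz kernels with
coefficients `e^{2πi r²/N}`, and their functional equation gives `√x θ(τ) → G(N)`. On the other
hand, when `4 ∣ N` the element `S T^{N/2} S` of the theta group maps `τ` to `4i/x - 2/N`, which
tends to `i∞`, and its automorphy factor gives `√x θ(τ) = (1 + i) √N θ(4i/x - 2/N) → (1 + i) √N`.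
So `G(N) = (1 + i) √N`. For odd `k`, splitting the residues mod `8k` by parity (the even ones
cancel in pairs) gives `G(8k) = 4 e^{iπ/(4k)} ∑_{n < k} e^{iπ(n² - n)/k}`.
-/

theorem Complex.mul_cpow_of_re_pos {x y : ℂ} (hx : 0 < x.re) (hy : 0 < y.re) (s : ℂ) :
    (x * y) ^ s = x ^ s * y ^ s := by
  have hx₀ : x ≠ 0 := fun h => by simp [h] at hx
  have hy₀ : y ≠ 0 := fun h => by simp [h] at hy
  have hax := abs_lt.mp (abs_arg_lt_pi_div_two_iff.mpr (Or.inl hx))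
  have hay := abs_lt.mp (abs_arg_lt_pi_div_two_iff.mpr (Or.inl hy))
  have hlog : log (x * y) = log x + log y :=
    (log_mul_eq_add_log_iff hx₀ hy₀).mpr ⟨by linarith, by linarith⟩
  rw [cpow_def_of_ne_zero (mul_ne_zero hx₀ hy₀), cpow_def_of_ne_zero hx₀,
    cpow_def_of_ne_zero hy₀, hlog, add_mul, Complex.exp_add]

theorem jacobiTheta_add_two_mul_natCast (τ : ℂ) (m : ℕ) :
    jacobiTheta (τ + 2 * m) = jacobiTheta τ := by
  induction m with
  | zero => simp
  | succ m ih => rw [Nat.cast_succ, mul_add_one, ← add_assoc, add_comm, jacobiTheta_two_add, ih]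

theorem jacobiTheta_neg_one_div {τ : ℂ} (hτ : 0 < τ.im) :
    jacobiTheta (-1 / τ) = (-I * τ) ^ (1 / 2 : ℂ) * jacobiTheta τ := by
  have h := jacobiTheta_S_smul ⟨τ, hτ⟩
  rw [UpperHalfPlane.modular_S_smul] at h
  simpa [neg_div, inv_neg] using h

theorem jacobiTheta_div_one_sub_two_mul {τ : ℂ} (hτ : 0 < τ.im) (m : ℕ) :
    jacobiTheta (τ / (1 - 2 * m * τ)) = (1 - 2 * m * τ) ^ (1 / 2 : ℂ) * jacobiTheta τ := by
  have hτ₀ : τ ≠ 0 := fun h => by simp [h] at hτ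
  set τ' := -1 / τ + 2 * m
  have hτ' : 0 < τ'.im := by
    have : τ'.im = τ.im / normSq τ := by simp [τ', neg_div, inv_im]
    rw [this]
    exact div_pos hτ (normSq_pos.mpr hτ₀)
  have hτ'₀ : τ' ≠ 0 := fun h => by simp [h] at hτ'
  have hprod : -I * τ' * (-I * τ) = 1 - 2 * m * τ := by
    simp only [τ']
    field_simp
    linear_combination (2 * m * τ - 1) * I_sq
  rw [show τ / (1 - 2 * m * τ) = -1 / τ' by rw [← hprod]; field_simp; linear_combination I_sq,
    jacobiTheta_neg_one_div hτ', jacobiTheta_add_two_mul_natCast, jacobiTheta_neg_one_div hτ,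
    ← mul_assoc, ← mul_cpow_of_re_pos (by simpa using hτ') (by simpa using hτ), hprod]

theorem tendsto_jacobiTheta_comap_im_atTop : Tendsto jacobiTheta (comap im atTop) (𝓝 1) := by
  have hdecay : Tendsto (fun τ : ℂ => rexp (-π * τ.im)) (comap im atTop) (𝓝 0) :=
    (tendsto_exp_atBot.comp (tendsto_id.const_mul_atTop_of_neg (neg_neg_of_pos pi_pos))).comp
      tendsto_comap
  simpa using (isBigO_at_im_infty_jacobiTheta_sub_one.trans_tendsto hdecay).add_const 1

theorem tendsto_rpow_half_mul_evenKernel (a : UnitAddCircle) :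
    Tendsto (fun x : ℝ => x ^ (1 / 2 : ℝ) * evenKernel a x) (𝓝[>] 0) (𝓝 1) := by
  obtain ⟨p, hp, hO⟩ := isBigO_atTop_cosKernel_sub a
  have hcos : Tendsto (cosKernel a) atTop (𝓝 1) := by
    have hdecay : Tendsto (fun x : ℝ => rexp (-p * x)) atTop (𝓝 0) :=
      tendsto_exp_atBot.comp (tendsto_id.const_mul_atTop_of_neg (neg_neg_of_pos hp))
    simpa using (hO.trans_tendsto hdecay).add_const 1
  refine (hcos.comp tendsto_inv_nhdsGT_zero).congr' ?_
  filter_upwards [self_mem_nhdsWithin] with x hx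
  have hx' : x ^ (1 / 2 : ℝ) ≠ 0 := (rpow_pos_of_pos hx _).ne'
  rw [evenKernel_functional_equation, Function.comp_apply, one_div x, ← mul_assoc,
    mul_one_div_cancel hx', one_mul]

theorem im_two_div_add_I_mul_div_sq (N : ℕ) (x : ℝ) :
    (2 / N + I * x / N ^ 2 : ℂ).im = x / N ^ 2 := by
  simp [← ofReal_natCast, ← ofReal_pow, div_ofReal_im]

theorem jacobiTheta_eq_sum_evenKernel (N : ℕ) [NeZero N] {x : ℝ} (hx : 0 < x) :
    jacobiTheta (2 / N + I * x / N ^ 2) =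
      ∑ r ∈ range N, cexp (2 * π * I * r ^ 2 / N) * evenKernel (r / N : ℝ) x := by
  set τ : ℂ := 2 / N + I * x / N ^ 2
  have hN : (N : ℂ) ≠ 0 := Nat.cast_ne_zero.mpr (NeZero.ne N)
  have hτ : 0 < τ.im := by
    have : (0 : ℝ) < N := Nat.cast_pos.mpr (Nat.pos_of_neZero N)
    rw [im_two_div_add_I_mul_div_sq]
    positivity
  have hθ : HasSum (fun n : ℤ => cexp (π * I * n ^ 2 * τ)) (jacobiTheta τ) := by
    simpa [jacobiTheta₂_term, ← jacobiTheta_eq_jacobiTheta₂] using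
      hasSum_jacobiTheta₂_term 0 hτ
  have hterm (r : Fin N) (m : ℤ) : cexp (π * I * ((m * N + r : ℤ) : ℂ) ^ 2 * τ) =
      cexp (2 * π * I * (r : ℕ) ^ 2 / N) * rexp (-π * (m + (r : ℕ) / N) ^ 2 * x) := by
    rw [ofReal_exp, ← Complex.exp_add]
    refine exp_eq_exp_iff_exists_int.mpr ⟨N * m ^ 2 + 2 * m * r, ?_⟩
    simp only [τ]
    push_cast
    field_simp
    linear_combination x * (m * N + (r : ℕ)) ^ 2 * I_sq
  have hfiber (r : Fin N) :
      HasSum (fun m : ℤ => cexp (π * I * ((m * N + r : ℤ) : ℂ) ^ 2 * τ))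
        (cexp (2 * π * I * (r : ℕ) ^ 2 / N) * evenKernel ((r : ℕ) / N : ℝ) x) := by
    simp only [hterm]
    exact ((hasSum_ofReal.mpr (hasSum_int_evenKernel _ hx)).mul_left _)
  rw [← Fin.sum_univ_eq_sum_range
    (fun r => cexp (2 * π * I * r ^ 2 / N) * evenKernel (r / N : ℝ) x)]
  exact ((((Equiv.prodComm _ _).trans (Int.divModEquiv N).symm).hasSum_iff.mpr hθ).prod_fiberwise
    hfiber).tsum_eq.symm.trans (tsum_fintype _)

theorem tendsto_sqrt_mul_jacobiTheta (N : ℕ) [NeZero N] :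
    Tendsto (fun x : ℝ => (√x : ℂ) * jacobiTheta (2 / N + I * x / N ^ 2)) (𝓝[>] 0)
      (𝓝 (∑ r ∈ range N, cexp (2 * π * I * r ^ 2 / N))) := by
  have h := tendsto_finsetSum (range N) fun r _ =>
    ((continuous_ofReal.tendsto 1).comp
      (tendsto_rpow_half_mul_evenKernel (r / N : ℝ))).const_mul (cexp (2 * π * I * r ^ 2 / N))
  simp only [ofReal_one, mul_one] at h
  refine h.congr' ?_
  filter_upwards [self_mem_nhdsWithin] with x hx
  rw [jacobiTheta_eq_sum_evenKernel N hx, mul_sum, sqrt_eq_rpow]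
  refine sum_congr rfl fun r _ => ?_
  simp only [Function.comp_apply, ofReal_mul]
  ring

theorem sqrt_mul_jacobiTheta_eq {N : ℕ} (hN : 4 ∣ N) (hN₀ : 0 < N) {x : ℝ} (hx : 0 < x) :
    (√x : ℂ) * jacobiTheta (2 / N + I * x / N ^ 2) =
      (1 + I) * √N * jacobiTheta (4 * I / x - 2 / N) := by
  obtain ⟨M, rfl⟩ := hN
  have hM : (0 : ℝ) < M := by exact_mod_cast (by omega : 0 < M)
  have hMC : (M : ℂ) ≠ 0 := by exact_mod_cast hM.ne'
  have hx' : (x : ℂ) ≠ 0 := ofReal_ne_zero.mpr hx.ne'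
  have hsqrtN : (√(4 * M : ℕ) : ℂ) ≠ 0 := by
    exact_mod_cast (sqrt_pos.mpr (by exact_mod_cast hN₀)).ne'
  set τ : ℂ := 2 / (4 * M : ℕ) + I * x / (4 * M : ℕ) ^ 2
  have hτ : 0 < τ.im := by rw [im_two_div_add_I_mul_div_sq]; positivity
  have hfactor : 1 - 2 * M * τ = -I * x / (8 * M) := by
    simp only [τ]; push_cast; field_simp; ring
  set v : ℂ := √x * (1 - I) / (2 * √(4 * M : ℕ))
  have hv : 0 < v.re := by
    have := sqrt_pos.mpr hx
    rw [show v = (√x / (2 * √(4 * M : ℕ)) : ℝ) * (1 - I) by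
      simp only [v]; push_cast; ring, re_ofReal_mul]
    simp only [sub_re, one_re, I_re, sub_zero, mul_one]
    positivity
  have hv_sq : v ^ 2 = 1 - 2 * M * τ := by
    rw [hfactor, div_pow, mul_pow, mul_pow, ← ofReal_pow, ← ofReal_pow, sq_sqrt hx.le,
      sq_sqrt (by positivity)]
    push_cast
    field_simp
    linear_combination 8 * I_sq
  have hinv : τ / (1 - 2 * M * τ) = 4 * I / x - 2 / (4 * M : ℕ) := by
    rw [hfactor]
    simp only [τ]
    push_cast
    field_simp
    linear_combination -64 * M * I_sq
  rw [← hinv, jacobiTheta_div_one_sub_two_mul hτ, ← hv_sq, one_div, sq_cpow_two_inv hv]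
  simp only [v]
  field_simp
  linear_combination (√x * jacobiTheta τ) * I_sq

theorem sum_range_exp_sq_div_eq_of_four_dvd {N : ℕ} (hN : 4 ∣ N) (hN₀ : 0 < N) :
    ∑ r ∈ range N, cexp (2 * π * I * r ^ 2 / N) = (1 + I) * √N := by
  have : NeZero N := ⟨hN₀.ne'⟩
  have hcusp : Tendsto (fun x : ℝ => 4 * I / x - 2 / N) (𝓝[>] 0) (comap im atTop) := by
    have him (x : ℝ) : (4 * I / x - 2 / N : ℂ).im = 4 * x⁻¹ := by
      rw [← ofReal_natCast, ← ofReal_ofNat 2, ← ofReal_div, sub_im, ofReal_im, sub_zero,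
        div_ofReal_im]
      simp [div_eq_mul_inv]
    refine tendsto_comap_iff.mpr ?_
    simpa only [Function.comp_def, him] using
      tendsto_inv_nhdsGT_zero.const_mul_atTop (by norm_num : (0 : ℝ) < 4)
  refine tendsto_nhds_unique (tendsto_sqrt_mul_jacobiTheta N) ?_
  have h := (tendsto_jacobiTheta_comap_im_atTop.comp hcusp).const_mul ((1 + I) * √N)
  rw [mul_one] at h
  refine h.congr' ?_
  filter_upwards [self_mem_nhdsWithin] with x hx
  exact (sqrt_mul_jacobiTheta_eq hN hN₀ hx).symm

theorem Function.Periodic.sum_range_mul {M : Type*} [AddCommMonoid M] {f : ℕ → M} {p : ℕ}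
    (hf : Function.Periodic f p) (m : ℕ) :
    ∑ n ∈ range (m * p), f n = m • ∑ n ∈ range p, f n := by
  induction m with
  | zero => simp
  | succ m ih =>
    rw [add_one_mul, sum_range_add, ih, succ_nsmul]
    congr 1
    refine sum_congr rfl fun n _ => ?_
    rw [add_comm, ← Nat.cast_id (m * p), ← Nat.cast_id p]
    exact (hf.nat_mul m) n

theorem Function.Antiperiodic.sum_range_two_mul_eq_zero {G : Type*} [AddCommGroup G]
    {f : ℕ → G} {p : ℕ} (hf : Function.Antiperiodic f p) :
    ∑ n ∈ range (2 * p), f n = 0 := by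
  rw [two_mul, sum_range_add, ← sum_add_distrib]
  exact sum_eq_zero fun n _ => by rw [add_comm p, hf n, add_neg_cancel]

theorem Function.Periodic.sum_range_add_one {M : Type*} [AddCommMonoid M] {f : ℕ → M} {p : ℕ}
    (hf : Function.Periodic f p) : ∑ n ∈ range p, f (n + 1) = ∑ n ∈ range p, f n := by
  cases p with
  | zero => simp
  | succ q => rw [sum_range_succ, sum_range_succ' f, show f (q + 1) = f 0 by simpa using hf 0]

theorem sum_range_two_mul_eq_even_add_odd {M : Type*} [AddCommMonoid M] (f : ℕ → M) (n : ℕ) :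
    ∑ i ∈ range (2 * n), f i =
      ∑ j ∈ range n, f (2 * j) + ∑ j ∈ range n, f (2 * j + 1) := by
  induction n with
  | zero => simp
  | succ n ih =>
    rw [mul_add_one, sum_range_succ, sum_range_succ, ih, sum_range_succ, sum_range_succ]
    abel

theorem sum_range_eight_mul_exp_eq {k : ℕ} (hk : Odd k) :
    ∑ r ∈ range (8 * k), cexp (2 * π * I * r ^ 2 / (8 * k : ℕ)) =
      4 * cexp (I * π / (4 * k)) * ∑ n ∈ range k, cexp (I * π * (n ^ 2 - n) / k) := by
  have hk₀ : (k : ℂ) ≠ 0 := by exact_mod_cast hk.pos.ne'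
  obtain ⟨t, ht⟩ := hk
  have hkt : (k : ℂ) = 2 * t + 1 := by exact_mod_cast ht
  set g : ℕ → ℂ := fun r => cexp (2 * π * I * r ^ 2 / (8 * k : ℕ))
  set s : ℕ → ℂ := fun n => cexp (I * π * (n ^ 2 - n) / k)
  have hg : Function.Periodic g (4 * k : ℕ) := fun r => by
    refine exp_eq_exp_iff_exists_int.mpr ⟨r + 2 * k, ?_⟩
    push_cast; field_simp; ring
  have hg_even : Function.Antiperiodic (fun j => g (2 * j)) k := fun j => by
    simp only [g]
    rw [← mul_neg_one, ← exp_pi_mul_I, ← Complex.exp_add]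
    refine exp_eq_exp_iff_exists_int.mpr ⟨j + t, ?_⟩
    push_cast; field_simp; linear_combination 8 * k * hkt
  have hg_odd (j : ℕ) : g (2 * j + 1) = cexp (I * π / (4 * k)) * s (j + 1) := by
    simp only [g, s]
    rw [← Complex.exp_add]
    congr 1
    push_cast; field_simp; ring
  have hs : Function.Periodic s k := fun n => by
    refine exp_eq_exp_iff_exists_int.mpr ⟨n + t, ?_⟩
    push_cast; field_simp; linear_combination k * hkt
  have hs' : Function.Periodic (fun n => s (n + 1)) k := fun n => by
    simpa [add_right_comm] using hs (n + 1)
  calc ∑ r ∈ range (8 * k), g r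
      = 2 * (∑ j ∈ range (2 * k), g (2 * j) + ∑ j ∈ range (2 * k), g (2 * j + 1)) := by
        rw [show 8 * k = 2 * (4 * k) by ring, hg.sum_range_mul, show 4 * k = 2 * (2 * k) by ring,
          sum_range_two_mul_eq_even_add_odd, nsmul_eq_mul, Nat.cast_ofNat]
    _ = 2 * (cexp (I * π / (4 * k)) * (2 * ∑ n ∈ range k, s n)) := by
        rw [hg_even.sum_range_two_mul_eq_zero, zero_add]
        simp only [hg_odd, ← mul_sum]
        rw [hs'.sum_range_mul, hs.sum_range_add_one, nsmul_eq_mul, Nat.cast_ofNat]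
    _ = 4 * cexp (I * π / (4 * k)) * ∑ n ∈ range k, s n := by ring

theorem gauss_sum_n_sq_sub_n_odd_general (k : ℕ) (hodd : Odd k) :
    ∑ n ∈ Finset.range k,
        Complex.exp (Complex.I * (π : ℂ) * ((n : ℂ) ^ 2 - (n : ℂ)) / (k : ℂ)) =
      ((1 + Complex.I) / 2) * Complex.exp (-Complex.I * (π : ℂ) / (4 * (k : ℂ))) *
        (Real.sqrt (2 * (k : ℝ)) : ℂ) := by
  have hG := sum_range_exp_sq_div_eq_of_four_dvd (N := 8 * k) ⟨2 * k, by ring⟩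
    (Nat.mul_pos (by norm_num) hodd.pos)
  rw [sum_range_eight_mul_exp_eq hodd] at hG
  have hsqrt : (√((8 * k : ℕ) : ℝ) : ℂ) = 2 * √(2 * k) := by
    rw [show ((8 * k : ℕ) : ℝ) = 2 ^ 2 * (2 * k) by push_cast; ring, sqrt_mul (by positivity),
      sqrt_sq zero_le_two, ofReal_mul, ofReal_ofNat]
  have hexp : cexp (I * π / (4 * k)) * cexp (-I * π / (4 * k)) = 1 := by
    rw [← Complex.exp_add, neg_mul, neg_div, add_neg_cancel, Complex.exp_zero]
  rw [hsqrt] at hG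
  linear_combination cexp (-I * π / (4 * k)) / 4 * hG -
    (∑ n ∈ range k, cexp (I * π * (n ^ 2 - n) / k)) * hexp

theorem gauss_sum_n_sq_sub_n_odd (k : ℕ) (hk : 0 < k) (hodd : Odd k) :
    ∑ n ∈ Finset.range k,
        Complex.exp (Complex.I * (π : ℂ) * ((n : ℂ) ^ 2 - (n : ℂ)) / (k : ℂ)) =
      ((1 + Complex.I) / 2) * Complex.exp (-Complex.I * (π : ℂ) / (4 * (k : ℂ))) *
        (Real.sqrt (2 * (k : ℝ)) : ℂ) :=
  gauss_sum_n_sq_sub_n_odd_general k hodd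
end
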